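/- Let P1 be a graph pattern whose translation ⟪P1⟫^{G'} correctly represents ⟦P1⟧_{D(G_j)} for each graph identifier j, and let v be a variable not in var(P1). Consider the translated expression ⟪(GRAPH v P1)⟫^G = ⟪()⟫^G ⋈ Π_{{v} ∪ var(P1)}[ ρ_{G'←gid, v←IRI}( σ_{gid > 0}(Graphs) ) ⋈ ⟪P1⟫^{G'} ]. Then for every graph identifier j, the tuples with G = j are in one-to-one, multiplicity-preserving correspondence with the solution mappings of the multiset (⟦P1⟧_{D(G_1)} ⋈ {| v → u_1 |}) ∪ … ∪ (⟦P1⟧_{D(G_n)} ⋈ {| v → u_n |}); hence the translation correctly represents ⟦(GRAPH v P1)⟧_{D(G_j)}, independently of the active graph. -/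

import Mathlib

/-!
Core formalization of SPARQL 1.1 multiset semantics and of the paper's
translation of SPARQL graph patterns into bag-semantics relational algebra
over the base relations `Graphs` and `Quads`.

Tuples of a translated expression `⟪P⟫^G` (whose attributes are the graph
attribute `G` together with the in-scope variables `var(P)`) are encoded as
pairs `(j, μ) : ℕ × SolMap`, where `j` is the value of the graph attribute and
`μ v = some t` means the attribute `v` holds the RDF term `t`, while
`μ v = none` means the attribute `v` holds the distinguished value `unb`.
-/

noncomputable section
open Classical

/-- RDF terms: IRIs, blank nodes and literals. -/
inductive RDFTerm where
  | iri : String → RDFTerm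
  | blank : String → RDFTerm
  | lit : String → RDFTerm
deriving DecidableEq

abbrev Var := String
abbrev Triple := RDFTerm × RDFTerm × RDFTerm
/-- A graph is a set of triples (no duplicates). -/
abbrev RDFGraph := Finset Triple

/-- An RDF dataset: a default graph and named graphs with pairwise distinct IRIs. -/
structure Dataset where
  dflt : RDFGraph
  named : List (String × RDFGraph)
  distinctNames : (named.map Prod.fst).Nodup

instance : Zero (Option RDFTerm) := ⟨none⟩

/-- A solution mapping: a partial function from variables to RDF terms
(finitely supported; `none` = the variable is unbound / attribute value `unb`). -/
abbrev SolMap := Var →₀ Option RDFTerm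

/-- Domain of a solution mapping. -/
def dom (μ : SolMap) : Finset Var := μ.support

/-- Two solution mappings are compatible if they agree on their common domain. -/
def compatible (μ1 μ2 : SolMap) : Prop := ∀ v ∈ dom μ1 ∩ dom μ2, μ1 v = μ2 v

/-- Union (merge) of two solution mappings; pointwise, this is the function
`first` of the paper: take the first value that is not `unb`. -/
def munion (μ1 μ2 : SolMap) : SolMap :=
  Finsupp.zipWith (fun a b => a.orElse (fun _ => b)) rfl μ1 μ2

/-- SPARQL Join of two multisets of solution mappings:
`Ω1 ⋈ Ω2 = {| μ1 ∪ μ2 : μ1 ∈ Ω1, μ2 ∈ Ω2, μ1 and μ2 compatible |}`. -/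
def mJoin (Ω1 Ω2 : Multiset SolMap) : Multiset SolMap :=
  Ω1.bind fun μ1 => (Ω2.filter fun μ2 => compatible μ1 μ2).map fun μ2 => munion μ1 μ2

/-- A component of a triple pattern: an RDF term or a variable. -/
inductive TP where
  | term : RDFTerm → TP
  | var : Var → TP
deriving DecidableEq

mutual
/-- SPARQL graph patterns.  `opt P1 P2 R` is `(P1 OPTIONAL (P2 FILTER R))`;
plain `OPTIONAL` is recovered with `R = FilterExpr.tt`. -/
inductive Pattern where
  | empty : Pattern
  | triple : TP → TP → TP → Pattern
  | and : Pattern → Pattern → Pattern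
  | union : Pattern → Pattern → Pattern
  | minus : Pattern → Pattern → Pattern
  | opt : Pattern → Pattern → FilterExpr → Pattern
  | filter : Pattern → FilterExpr → Pattern
  | graphIRI : String → Pattern → Pattern
  | graphVar : Var → Pattern → Pattern

/-- SPARQL filter expressions; `base` is an abstract boolean condition on the
current solution mapping, `ex`/`nex` are `EXISTS`/`NOT EXISTS` patterns. -/
inductive FilterExpr where
  | tt : FilterExpr
  | base : (SolMap → Prop) → FilterExpr
  | ex : Pattern → FilterExpr
  | nex : Pattern → FilterExpr
  | fand : FilterExpr → FilterExpr → FilterExpr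
  | forr : FilterExpr → FilterExpr → FilterExpr
  | fnot : FilterExpr → FilterExpr
end

def varTP : TP → Finset Var
  | .term _ => ∅
  | .var v => {v}

/-- In-scope variables `var(P)` of a graph pattern. -/
def varP : Pattern → Finset Var
  | .empty => ∅
  | .triple s p o => varTP s ∪ varTP p ∪ varTP o
  | .and P1 P2 => varP P1 ∪ varP P2
  | .union P1 P2 => varP P1 ∪ varP P2
  | .minus P1 _ => varP P1
  | .opt P1 P2 _ => varP P1 ∪ varP P2
  | .filter P1 _ => varP P1
  | .graphIRI _ P1 => varP P1
  | .graphVar v P1 => insert v (varP P1)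

/-- Substitution of a solution mapping in a triple-pattern component. -/
def substTP (μ : SolMap) : TP → TP
  | .term a => .term a
  | .var v =>
      match μ v with
      | some t => .term t
      | none => .var v

/-- Unification of a triple-pattern component with an RDF term, extending a
solution mapping (handles repeated variables). -/
def unify : TP → RDFTerm → SolMap → Option SolMap
  | .term a, b, μ => if a = b then some μ else none
  | .var v, b, μ =>
      match μ v with
      | none => some (Finsupp.update μ v (some b))
      | some c => if c = b then some μ else none

/-- Matching a triple pattern against a triple: returns the unique solution
mapping `μ` with `dom μ = var(t)` and `μ(t) = tr`, if it exists. -/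
def matchT (s p o : TP) (tr : Triple) : Option SolMap :=
  (unify s tr.1 0).bind fun μ1 => (unify p tr.2.1 μ1).bind fun μ2 => unify o tr.2.2 μ2

/-- Number of named graphs of the dataset; graph identifiers are `0, …, nGraphs D`. -/
def nGraphs (D : Dataset) : ℕ := D.named.length

/-- The graph with identifier `j` (`0` is the default graph). -/
def graphAt (D : Dataset) : ℕ → RDFGraph
  | 0 => D.dflt
  | Nat.succ k => ((D.named[k]?).map Prod.snd).getD ∅

/-- The graph identifier of the named graph with IRI `u`, if any. -/
def gidOf (D : Dataset) (u : String) : Option ℕ :=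
  (D.named.findIdx? (fun x => x.1 = u)).map (· + 1)

/-- The named graphs of the dataset, enumerated with their identifiers. -/
def namedEnum (D : Dataset) : List (ℕ × String) :=
  D.named.zipIdx.map fun p => (p.2 + 1, p.1.1)

mutual
/-- SPARQL 1.1 evaluation `⟦pre(P)⟧_{D(G_g)}` of the graph pattern `P`,
pre-instantiated by the substitution `pre` (needed for `EXISTS`),
over the dataset `D` with active graph `G_g`.  The plain evaluation
`⟦P⟧_{D(G_g)}` is `evalPat D 0 g P`. -/
def evalPat (D : Dataset) (pre : SolMap) : ℕ → Pattern → Multiset SolMap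
  | _, .empty => {0}
  | g, .triple s p o =>
      (graphAt D g).val.filterMap fun tr =>
        matchT (substTP pre s) (substTP pre p) (substTP pre o) tr
  | g, .and P1 P2 => mJoin (evalPat D pre g P1) (evalPat D pre g P2)
  | g, .union P1 P2 => evalPat D pre g P1 + evalPat D pre g P2
  | g, .minus P1 P2 =>
      (evalPat D pre g P1).filter fun μ1 =>
        ∀ μ2 ∈ evalPat D pre g P2, ¬ compatible μ1 μ2 ∨ dom μ1 ∩ dom μ2 = ∅
  | g, .opt P1 P2 R =>
      ((mJoin (evalPat D pre g P1) (evalPat D pre g P2)).filter fun μ => satF D pre g R μ)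
      + ((evalPat D pre g P1).filter fun μ1 =>
          ∀ μ2 ∈ evalPat D pre g P2,
            ¬ compatible μ1 μ2 ∨ (compatible μ1 μ2 ∧ ¬ satF D pre g R (munion μ1 μ2)))
  | g, .filter P1 R => (evalPat D pre g P1).filter fun μ => satF D pre g R μ
  | _, .graphIRI u P1 =>
      match gidOf D u with
      | some i => evalPat D pre i P1
      | none => 0
  | g, .graphVar v P1 =>
      match pre v with
      | some (RDFTerm.iri u) =>
          (match gidOf D u with
           | some i => evalPat D pre i P1
           | none => 0)
      | some _ => 0
      | none =>
          (↑(namedEnum D) : Multiset (ℕ × String)).bind fun p =>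
            mJoin (evalPat D pre p.1 P1) {Finsupp.single v (some (RDFTerm.iri p.2))}
termination_by g P => sizeOf P

/-- Satisfaction `μ ⊨_{D(G_g)} R` of a filter expression by a solution mapping,
under the pre-instantiation `pre`; `EXISTS(P)` holds iff `⟦μ(P)⟧_{D(G_g)}`
is a non-empty multiset. -/
def satF (D : Dataset) (pre : SolMap) : ℕ → FilterExpr → SolMap → Prop
  | _, .tt, _ => True
  | _, .base f, μ => f μ
  | g, .ex P, μ => evalPat D (munion pre μ) g P ≠ 0
  | g, .nex P, μ => evalPat D (munion pre μ) g P = 0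
  | g, .fand R1 R2, μ => satF D pre g R1 μ ∧ satF D pre g R2 μ
  | g, .forr R1 R2, μ => satF D pre g R1 μ ∨ satF D pre g R2 μ
  | g, .fnot R1, μ => ¬ satF D pre g R1 μ
termination_by g R μ => sizeOf R
end

/-! ### The base relations `Graphs` and `Quads` and the relational translation -/

/-- The base relation `Graphs(gid, IRI)`: the tuple `(0, <>)` for the default
graph (no IRI) and a tuple `(i, u_i)` for each named graph. -/
def graphsRel (D : Dataset) : Multiset (ℕ × Option String) :=
  ↑((0, (none : Option String)) :: (namedEnum D).map fun p => (p.1, some p.2))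

/-- The base relation `Quads(gid, sub, pred, obj)`. -/
def quadsRel (D : Dataset) : Multiset (ℕ × Triple) :=
  (graphsRel D).bind fun p => (graphAt D p.1).val.map fun tr => (p.1, tr)

/-- `⟪()⟫^G = Π_G[ρ_{G←gid}(Graphs)]`, the translation of the empty graph
pattern (tuples have the single attribute `G`, i.e. second component `0`). -/
def unitRel (D : Dataset) : Multiset (ℕ × SolMap) := (graphsRel D).map fun p => (p.1, 0)

/-- The condition `comp`: for each common variable `v`,
`v' = unb ∨ v'' = unb ∨ v' = v''`. -/
def compCond (common : Finset Var) (μ1 μ2 : SolMap) : Prop :=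
  ∀ v ∈ common, μ1 v = none ∨ μ2 v = none ∨ μ1 v = μ2 v

/-- The condition `disj`: for each common variable `v`, `v = unb ∨ v' = unb`. -/
def disjCond (common : Finset Var) (μ1 μ2 : SolMap) : Prop :=
  ∀ v ∈ common, μ1 v = none ∨ μ2 v = none

/-- The condition `subst`: for each common variable `v`, `v = v' ∨ v = unb`. -/
def substCond (common : Finset Var) (μ μ' : SolMap) : Prop :=
  ∀ v ∈ common, μ v = μ' v ∨ μ v = none

/-- The translation of `AND`: rename the common variables apart, join on the
graph attribute, select with `comp`, and project back using `first`. -/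
def transAnd (common : Finset Var) (R1 R2 : Multiset (ℕ × SolMap)) : Multiset (ℕ × SolMap) :=
  R1.bind fun t1 => R2.bind fun t2 =>
    if t1.1 = t2.1 ∧ compCond common t1.2 t2.2 then {(t1.1, munion t1.2 t2.2)} else 0

/-- Bag-semantics natural join of two relations over identical attribute sets
(tuples join exactly with equal tuples, multiplicities multiply). -/
def bagJoinSame (A B : Multiset (ℕ × SolMap)) : Multiset (ℕ × SolMap) :=
  A.bind fun t => Multiset.replicate (B.count t) t

/-- Projection of a tuple onto a set of variable attributes. -/
def restrict (μ : SolMap) (S : Finset Var) : SolMap :=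
  Finsupp.filter (fun v => v ∈ S) μ

/-- The translation of `MINUS`:
`⟪P1⟫ ⋈ [δ(⟪P1⟫) − Π_{G,var(P1)}(σ_{comp ∧ ¬disj}(⟪P1⟫ ⋈ ρ(⟪P2⟫)))]`. -/
def transMinus (common : Finset Var) (R1 R2 : Multiset (ℕ × SolMap)) : Multiset (ℕ × SolMap) :=
  let inner := R1.bind fun t1 => R2.bind fun t2 =>
    if t1.1 = t2.1 ∧ compCond common t1.2 t2.2 ∧ ¬ disjCond common t1.2 t2.2 then {t1} else 0
  bagJoinSame R1 (R1.dedup - inner)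

/-- The auxiliary expression `E_i` of the translation of `FILTER`, for an
`EXISTS`/`NOT EXISTS` subpattern with translation `Pi'`:
`Π_{G,var(P),ex_i←0}[δ(P') − Π_{G,var(P)}(σ_subst(P' ⋈ ρ(Pi')))]
 ∪ Π_{G,var(P),ex_i←1}[δ(P') − [δ(P') − Π_{G,var(P)}(σ_subst(P' ⋈ ρ(Pi')))]]`. -/
def buildE (VP Vi : Finset Var) (P' Pi' : Multiset (ℕ × SolMap)) :
    Multiset (ℕ × SolMap × ℕ) :=
  let inner := P'.bind fun t => Pi'.bind fun t' =>
    if t.1 = t'.1 ∧ substCond (VP ∩ Vi) t.2 t'.2 then {t} else 0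
  ((P'.dedup - inner).map fun t => (t.1, t.2, 0))
  + ((P'.dedup - (P'.dedup - inner)).map fun t => (t.1, t.2, 1))

/-- Evaluation of the relational condition `filter` obtained from `R`, where
the occurrences of `EXISTS(P_i)` (resp. `NOT EXISTS(P_i)`), in left-to-right
order, are replaced by `ex_i <> 0` (resp. `ex_i = 0`), the values of the
attributes `ex_i` being supplied by the list `bs`. -/
def condEval : FilterExpr → SolMap → List ℕ → Prop × List ℕ
  | .tt, _, bs => (True, bs)
  | .base f, μ, bs => (f μ, bs)
  | .ex _, _, bs => (bs.headD 0 ≠ 0, bs.tail)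
  | .nex _, _, bs => (bs.headD 0 = 0, bs.tail)
  | .fand R1 R2, μ, bs =>
      let r1 := condEval R1 μ bs
      let r2 := condEval R2 μ r1.2
      (r1.1 ∧ r2.1, r2.2)
  | .forr R1 R2, μ, bs =>
      let r1 := condEval R1 μ bs
      let r2 := condEval R2 μ r1.2
      (r1.1 ∨ r2.1, r2.2)
  | .fnot R1, μ, bs =>
      let r1 := condEval R1 μ bs
      (¬ r1.1, r1.2)

/-- Natural join of the running relation with an auxiliary relation `E_i`
(join on the graph attribute and all the variable attributes). -/
def joinE (A : Multiset (ℕ × SolMap × List ℕ)) (E : Multiset (ℕ × SolMap × ℕ)) :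
    Multiset (ℕ × SolMap × List ℕ) :=
  A.bind fun a => E.bind fun e =>
    if a.1 = e.1 ∧ a.2.1 = e.2.1 then {(a.1, a.2.1, a.2.2 ++ [e.2.2])} else 0

/-- The translation of `FILTER`:
`Π_{G,var(P)}[σ_filter(P' ⋈ E_1 ⋈ … ⋈ E_m)]`. -/
def filterApply (P' : Multiset (ℕ × SolMap)) (Es : List (Multiset (ℕ × SolMap × ℕ)))
    (R : FilterExpr) : Multiset (ℕ × SolMap) :=
  ((Es.foldl joinE (P'.map fun t => (t.1, t.2, ([] : List ℕ)))).filter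
      fun x => (condEval R x.2.1 x.2.2).1).map fun x => (x.1, x.2.1)

mutual
/-- The paper's translation `⟪P⟫^G` of a graph pattern into a bag-semantics
relational algebra expression over `Graphs` and `Quads`, evaluated;
tuples are encoded as pairs `(j, μ)` (graph attribute value, values of the
variable attributes with `none` = `unb`). -/
def transP (D : Dataset) : Pattern → Multiset (ℕ × SolMap)
  | .empty => unitRel D
  | .triple s p o =>
      (quadsRel D).filterMap fun q => (matchT s p o q.2).map fun μ => (q.1, μ)
  | .and P1 P2 => transAnd (varP P1 ∩ varP P2) (transP D P1) (transP D P2)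
  | .union P1 P2 => transP D P1 + transP D P2
  | .minus P1 P2 => transMinus (varP P1 ∩ varP P2) (transP D P1) (transP D P2)
  | .opt P1 P2 R =>
      let R1 := transP D P1
      let J := transAnd (varP P1 ∩ varP P2) R1 (transP D P2)
      let F := filterApply J (transEs D (varP P1 ∪ varP P2) J R) R
      J + bagJoinSame R1 (R1.dedup - F.map fun t => (t.1, restrict t.2 (varP P1)))
  | .filter P1 R =>
      let P' := transP D P1
      filterApply P' (transEs D (varP P1) P' R) R
  | .graphIRI u P1 =>
      let inner : Multiset SolMap :=
        (graphsRel D).bind fun p =>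
          if p.2 = some u then (transP D P1).bind (fun t => if t.1 = p.1 then {t.2} else 0)
          else 0
      (graphsRel D).bind fun p => inner.map fun μ => (p.1, μ)
  | .graphVar v P1 =>
      let inner : Multiset SolMap :=
        (graphsRel D).bind fun p =>
          match p.2 with
          | some u =>
              (transP D P1).bind fun t =>
                if t.1 = p.1 then
                  (if v ∈ varP P1 then (if t.2 v = some (RDFTerm.iri u) then {t.2} else 0)
                   else {Finsupp.update t.2 v (some (RDFTerm.iri u))})
                else 0
          | none => 0
      (graphsRel D).bind fun p => inner.map fun μ => (p.1, μ)
termination_by P => sizeOf P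

/-- The list of auxiliary expressions `E_1, …, E_m`, one for each occurrence of
`EXISTS`/`NOT EXISTS` in the filter expression, in left-to-right order. -/
def transEs (D : Dataset) (VP : Finset Var) (P' : Multiset (ℕ × SolMap)) :
    FilterExpr → List (Multiset (ℕ × SolMap × ℕ))
  | .tt => []
  | .base _ => []
  | .ex Pi => [buildE VP (varP Pi) P' (transP D Pi)]
  | .nex Pi => [buildE VP (varP Pi) P' (transP D Pi)]
  | .fand R1 R2 => transEs D VP P' R1 ++ transEs D VP P' R2
  | .forr R1 R2 => transEs D VP P' R1 ++ transEs D VP P' R2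
  | .fnot R1 => transEs D VP P' R1
termination_by R => sizeOf R
end

/-- `⟪P⟫^G` correctly represents `⟦P⟧_{D(G_j)}` for every graph identifier `j`
of the dataset: for each `j` the tuples with graph attribute `j` are in
one-to-one multiplicity-preserving correspondence with the solution mappings
(`unb`, i.e. `none`, encoding that a variable is unbound). -/
def RepOK (D : Dataset) (P : Pattern) : Prop :=
  ∀ j ≤ nGraphs D, ∀ μ : SolMap, (transP D P).count (j, μ) = (evalPat D 0 j P).count μ

/-!
Since `v ∉ var(P1)`, the translation of `GRAPH v P1` is the product of the graph identifiers of
`⟪()⟫^G` with the union, over the named graphs `(i, u_i)`, of the slice of `⟪P1⟫^{G'}` at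
identifier `i` with every tuple extended by `v ↦ u_i`. Correctness of `⟪P1⟫` identifies that
slice with `⟦P1⟧_{D(G_i)}`, and as no solution of `P1` binds `v`, extending by `v ↦ u_i` is
exactly the SPARQL join with `{| v → u_i |}`. Each graph identifier occurs once in `Graphs`, so
every slice of the translation is that same union.
-/

lemma Multiset.count_product {α β : Type*} [DecidableEq α] [DecidableEq β]
    (s : Multiset α) (t : Multiset β) (a : α) (b : β) :
    (s ×ˢ t).count (a, b) = s.count a * t.count b := by
  induction s using Multiset.induction_on with
  | empty => simp
  | cons i s ih =>
    rw [Multiset.cons_product, Multiset.count_add, ih, Multiset.count_cons]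
    by_cases h : a = i
    · subst h
      rw [Multiset.count_map_eq_count' _ _ (Prod.mk_right_injective a)]
      simp [add_mul, add_comm]
    · rw [Multiset.count_eq_zero_of_notMem (by simp [Ne.symm h])]
      simp [h]

lemma dom_munion (μ1 μ2 : SolMap) : dom (munion μ1 μ2) ⊆ dom μ1 ∪ dom μ2 :=
  Finsupp.support_zipWith

lemma mem_mJoin {Ω1 Ω2 : Multiset SolMap} {μ : SolMap} (h : μ ∈ mJoin Ω1 Ω2) :
    ∃ μ1 ∈ Ω1, ∃ μ2 ∈ Ω2, μ = munion μ1 μ2 := by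
  simp only [mJoin, Multiset.mem_bind, Multiset.mem_map, Multiset.mem_filter] at h
  obtain ⟨μ1, h1, μ2, ⟨h2, _⟩, rfl⟩ := h
  exact ⟨μ1, h1, μ2, h2, rfl⟩

lemma varTP_substTP_subset (pre : SolMap) (c : TP) : varTP (substTP pre c) ⊆ varTP c := by
  cases c with
  | term a => simp [substTP, varTP]
  | var w => cases h : pre w <;> simp [substTP, varTP, h]

lemma dom_subset_of_unify_eq_some {c : TP} {b : RDFTerm} {μ μ' : SolMap}
    (h : unify c b μ = some μ') : dom μ' ⊆ varTP c ∪ dom μ := by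
  cases c with
  | term a =>
    simp only [unify, Option.ite_none_right_eq_some, Option.some.injEq] at h
    simp [← h.2]
  | var w =>
    cases hw : μ w with
    | none =>
      simp only [unify, hw, Option.some.injEq] at h
      subst h
      simpa [dom, varTP] using Finsupp.support_update_subset (f := μ) (a := w) (b := some b)
    | some c =>
      simp only [unify, hw, Option.ite_none_right_eq_some, Option.some.injEq] at h
      simp [← h.2]

lemma dom_subset_of_matchT_eq_some {s p o : TP} {tr : Triple} {μ : SolMap}
    (h : matchT s p o tr = some μ) : dom μ ⊆ varTP s ∪ varTP p ∪ varTP o := by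
  simp only [matchT, Option.bind_eq_some_iff] at h
  obtain ⟨μ1, h1, μ2, h2, h3⟩ := h
  have h0 : dom (0 : SolMap) = ∅ := Finsupp.support_zero
  have := (dom_subset_of_unify_eq_some h3).trans <| Finset.union_subset_union le_rfl <|
    (dom_subset_of_unify_eq_some h2).trans <| Finset.union_subset_union le_rfl <|
    (dom_subset_of_unify_eq_some h1)
  rw [h0, Finset.union_empty] at this
  exact this.trans (by intro x; simp only [Finset.mem_union]; tauto)

lemma dom_subset_varP_of_mem_evalPat (D : Dataset) (pre : SolMap) :
    ∀ (P : Pattern) {g : ℕ} {μ : SolMap}, μ ∈ evalPat D pre g P → dom μ ⊆ varP P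
  | .empty, g, μ, h => by
    rw [evalPat, Multiset.mem_singleton] at h
    simp [h, dom, varP]
  | .triple s p o, g, μ, h => by
    rw [evalPat, Multiset.mem_filterMap] at h
    obtain ⟨tr, -, htr⟩ := h
    exact (dom_subset_of_matchT_eq_some htr).trans <| Finset.union_subset_union
      (Finset.union_subset_union (varTP_substTP_subset pre s) (varTP_substTP_subset pre p))
      (varTP_substTP_subset pre o)
  | .and P1 P2, g, μ, h => by
    rw [evalPat] at h
    obtain ⟨μ1, h1, μ2, h2, rfl⟩ := mem_mJoin h
    exact (dom_munion μ1 μ2).trans <| Finset.union_subset_union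
      (dom_subset_varP_of_mem_evalPat D pre P1 h1) (dom_subset_varP_of_mem_evalPat D pre P2 h2)
  | .union P1 P2, g, μ, h => by
    rw [evalPat, Multiset.mem_add] at h
    rcases h with h | h
    · exact (dom_subset_varP_of_mem_evalPat D pre P1 h).trans Finset.subset_union_left
    · exact (dom_subset_varP_of_mem_evalPat D pre P2 h).trans Finset.subset_union_right
  | .minus P1 P2, g, μ, h => by
    rw [evalPat, Multiset.mem_filter] at h
    exact dom_subset_varP_of_mem_evalPat D pre P1 h.1
  | .opt P1 P2 R, g, μ, h => by
    rw [evalPat, Multiset.mem_add, Multiset.mem_filter, Multiset.mem_filter] at h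
    rcases h with ⟨h, -⟩ | ⟨h, -⟩
    · obtain ⟨μ1, h1, μ2, h2, rfl⟩ := mem_mJoin h
      exact (dom_munion μ1 μ2).trans <| Finset.union_subset_union
        (dom_subset_varP_of_mem_evalPat D pre P1 h1) (dom_subset_varP_of_mem_evalPat D pre P2 h2)
    · exact (dom_subset_varP_of_mem_evalPat D pre P1 h).trans Finset.subset_union_left
  | .filter P1 R, g, μ, h => by
    rw [evalPat, Multiset.mem_filter] at h
    exact dom_subset_varP_of_mem_evalPat D pre P1 h.1
  | .graphIRI u P1, g, μ, h => by
    rw [evalPat] at h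
    split at h
    · exact dom_subset_varP_of_mem_evalPat D pre P1 h
    · simp at h
  | .graphVar w P1, g, μ, h => by
    rw [evalPat] at h
    have hP1 : varP P1 ⊆ varP (.graphVar w P1) := Finset.subset_insert _ _
    split at h
    · split at h
      · exact (dom_subset_varP_of_mem_evalPat D pre P1 h).trans hP1
      · simp at h
    · simp at h
    · obtain ⟨q, -, hq⟩ := Multiset.mem_bind.mp h
      obtain ⟨μ1, h1, μ2, h2, rfl⟩ := mem_mJoin hq
      rw [Multiset.mem_singleton] at h2
      subst h2
      refine (dom_munion _ _).trans (Finset.union_subset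
        ((dom_subset_varP_of_mem_evalPat D pre P1 h1).trans hP1) ?_)
      simp [dom, varP]

lemma compatible_single_of_apply_eq_none {μ : SolMap} {v : Var} (x : Option RDFTerm)
    (hμ : μ v = none) : compatible μ (Finsupp.single v x) := by
  intro w hw
  obtain ⟨hwμ, hws⟩ := Finset.mem_inter.mp hw
  obtain rfl : w = v := by
    by_contra hne
    exact Finsupp.mem_support_iff.mp hws (Finsupp.single_eq_of_ne hne)
  exact absurd hμ (Finsupp.mem_support_iff.mp hwμ)

lemma munion_single_of_apply_eq_none {μ : SolMap} {v : Var} (x : Option RDFTerm)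
    (hμ : μ v = none) : munion μ (Finsupp.single v x) = Finsupp.update μ v x := by
  ext1 w
  change (μ w).orElse (fun _ => Finsupp.single v x w) = _
  by_cases hwv : w = v
  · subst hwv
    simp [hμ]
  · rw [Finsupp.single_eq_of_ne hwv, Finsupp.update_apply, if_neg hwv]
    cases μ w <;> rfl

lemma mJoin_singleton_of_forall_apply_eq_none {Ω : Multiset SolMap} {v : Var}
    (hΩ : ∀ μ ∈ Ω, μ v = none) (x : Option RDFTerm) :
    mJoin Ω {Finsupp.single v x} = Ω.map fun μ => Finsupp.update μ v x := by
  rw [mJoin, ← Multiset.bind_singleton Ω]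
  refine Multiset.bind_congr fun μ hμ => ?_
  rw [Multiset.filter_singleton, if_pos (compatible_single_of_apply_eq_none x (hΩ μ hμ)),
    Multiset.map_singleton, munion_single_of_apply_eq_none x (hΩ μ hμ)]

lemma apply_eq_none_of_mem_evalPat {D : Dataset} {pre : SolMap} {g : ℕ} {P : Pattern}
    {μ : SolMap} {v : Var} (hv : v ∉ varP P) (hμ : μ ∈ evalPat D pre g P) : μ v = none :=
  Finsupp.notMem_support_iff.mp fun hvμ => hv (dom_subset_varP_of_mem_evalPat D pre P hμ hvμ)

lemma evalPat_graphVar_of_apply_eq_none {D : Dataset} {pre : SolMap} {v : Var} (g : ℕ)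
    (P : Pattern) (hv : pre v = none) :
    evalPat D pre g (.graphVar v P) = (↑(namedEnum D) : Multiset (ℕ × String)).bind fun q =>
      mJoin (evalPat D pre q.1 P) {Finsupp.single v (some (RDFTerm.iri q.2))} := by
  rw [evalPat, hv]

lemma map_fst_namedEnum (D : Dataset) :
    (namedEnum D).map Prod.fst = List.range' 1 (nGraphs D) := by
  rw [nGraphs, List.range'_succ_left, ← List.zipIdx_map_snd 0 D.named, namedEnum, List.map_map,
    List.map_map]
  rfl

lemma fst_le_nGraphs_of_mem_namedEnum {D : Dataset} {q : ℕ × String} (hq : q ∈ namedEnum D) :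
    q.1 ≤ nGraphs D := by
  have := List.mem_map_of_mem (f := Prod.fst) hq
  rw [map_fst_namedEnum, List.mem_range'_1] at this
  omega

lemma map_fst_graphsRel (D : Dataset) :
    (graphsRel D).map Prod.fst = Multiset.range (nGraphs D + 1) := by
  rw [graphsRel, Multiset.map_coe, Multiset.range, List.map_cons, List.map_map,
    List.range_eq_range', List.range'_succ, ← map_fst_namedEnum]
  rfl

def graphSlice (R : Multiset (ℕ × SolMap)) (i : ℕ) : Multiset SolMap :=
  (R.filter (·.1 = i)).map Prod.snd

lemma count_graphSlice (R : Multiset (ℕ × SolMap)) (i : ℕ) (μ : SolMap) :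
    (graphSlice R i).count μ = R.count (i, μ) := by
  induction R using Multiset.induction_on with
  | empty => simp [graphSlice]
  | cons t R ih =>
    rw [graphSlice, Multiset.filter_cons, Multiset.map_add, Multiset.count_add, ← graphSlice, ih]
    obtain ⟨k, μ'⟩ := t
    by_cases hk : k = i <;> by_cases hμ : μ = μ' <;>
      simp [hk, hμ, Multiset.count_cons] <;> omega

lemma RepOK.graphSlice_transP {D : Dataset} {P : Pattern} (h : RepOK D P) {i : ℕ}
    (hi : i ≤ nGraphs D) : graphSlice (transP D P) i = evalPat D 0 i P :=
  Multiset.ext.mpr fun μ => by rw [count_graphSlice, h i hi μ]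

lemma transP_graphVar_of_not_mem {D : Dataset} {v : Var} {P : Pattern} (hv : v ∉ varP P) :
    transP D (.graphVar v P) = Multiset.range (nGraphs D + 1) ×ˢ
      (↑(namedEnum D) : Multiset (ℕ × String)).bind fun q =>
        (graphSlice (transP D P) q.1).map fun μ =>
          Finsupp.update μ v (some (RDFTerm.iri q.2)) := by
  rw [transP, ← map_fst_graphsRel]
  dsimp only [SProd.sprod, Multiset.product]
  rw [Multiset.bind_map]
  congr! 3
  rw [graphsRel, ← Multiset.cons_coe, Multiset.cons_bind, ← Multiset.map_coe, Multiset.bind_map,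
    zero_add]
  refine Multiset.bind_congr fun q _ => ?_
  simp only [if_neg hv]
  rw [← Multiset.bind_filter, Multiset.bind_singleton, graphSlice, Multiset.map_map]
  rfl

/-- Let `P1` have a correct translation for each graph
identifier and let `v` be a variable not in `var(P1)`.  In
`⟪(GRAPH v P1)⟫^G = ⟪()⟫^G ⋈ Π_{{v}∪var(P1)}[ρ_{G'←gid, v←IRI}(σ_{gid>0}(Graphs)) ⋈ ⟪P1⟫^{G'}]`,
for every graph identifier `j` the tuples with `G = j` are in one-to-one,
multiplicity-preserving correspondence with the solution mappings of
`(⟦P1⟧_{D(G_1)} ⋈ {| v → u_1 |}) ∪ … ∪ (⟦P1⟧_{D(G_n)} ⋈ {| v → u_n |})`;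
hence the translation correctly represents `⟦(GRAPH v P1)⟧_{D(G_j)}`,
independently of the active graph. -/
theorem graphVar_correct (D : Dataset) (v : Var) (P1 : Pattern)
    (hv : v ∉ varP P1) (h1 : RepOK D P1) :
    ∀ j ≤ nGraphs D, ∀ μ : SolMap,
      (transP D (.graphVar v P1)).count (j, μ)
          = ((↑(namedEnum D) : Multiset (ℕ × String)).bind fun p =>
              mJoin (evalPat D 0 p.1 P1)
                {Finsupp.single v (some (RDFTerm.iri p.2))}).count μ
      ∧ (transP D (.graphVar v P1)).count (j, μ)
          = (evalPat D 0 j (.graphVar v P1)).count μ := by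
  intro j hj μ
  have hnamed : ((↑(namedEnum D) : Multiset (ℕ × String)).bind fun q =>
        (graphSlice (transP D P1) q.1).map fun μ => Finsupp.update μ v (some (RDFTerm.iri q.2)))
      = (↑(namedEnum D) : Multiset (ℕ × String)).bind fun q =>
        mJoin (evalPat D 0 q.1 P1) {Finsupp.single v (some (RDFTerm.iri q.2))} := by
    refine Multiset.bind_congr fun q hq => ?_
    rw [h1.graphSlice_transP (fst_le_nGraphs_of_mem_namedEnum hq),
      mJoin_singleton_of_forall_apply_eq_none fun μ1 => apply_eq_none_of_mem_evalPat hv]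
  have hcount : (Multiset.range (nGraphs D + 1)).count j = 1 :=
    Multiset.count_eq_one_of_mem (Multiset.nodup_range _) (Multiset.mem_range.mpr (by omega))
  rw [transP_graphVar_of_not_mem hv, hnamed, Multiset.count_product, hcount, one_mul,
    evalPat_graphVar_of_apply_eq_none j P1 rfl]
  exact ⟨rfl, rfl⟩

end
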